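/- Identify ℝ^m with ℝ^{m−n} × ℝ^n and let e_1, …, e_n be the constant vector fields given by the standard basis vectors of the second factor. Let U ⊆ ℝ^m be open, let F be a smooth vector field on U, set W_i := [F, e_i], and assume: (a) the 2n vectors e_1(z), …, e_n(z), W_1(z), …, W_n(z) are linearly independent at every z ∈ U; (b) [e_i, W_j](z) ∈ span{e_1(z), …, e_n(z)} for all z ∈ U and all i, j. Suppose F = a^i e_i + b^i W_i on U, where a^i, b^i : U → ℝ are smooth. Then ∂b^j/∂y^i = −δ^j_i on U for all i, j, where ∂/∂y^i denotes the partial derivative along e_i and δ^j_i is the Kronecker delta. -/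

import Mathlib

/-!
Along a constant field `e_i` the bracket reduces to a directional derivative: `W_i = [F, e_i] = -DF(e_i)`
and `[e_i, W_k] = DW_k(e_i)`. Differentiating `F = aᵏ e_k + bᵏ W_k` along `e_i` therefore gives
`-W_i = ∂_i bᵏ W_k` modulo `span{e_k}`, because the terms `∂_i aᵏ e_k` and `bᵏ [e_i, W_k]`
lie in that span.
The independence of `e_1, …, e_n, W_1, …, W_n` then forces `∂_i bᵏ + δᵏ_i = 0`.
-/

/-- The Lie bracket of two vector fields (as maps `E → E`), defined via the
Fréchet derivative: `[X,Y](z) = DY(z)(X(z)) − DX(z)(Y(z))`. -/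
noncomputable def lieB {E : Type*} [NormedAddCommGroup E] [NormedSpace ℝ E]
    (X Y : E → E) : E → E :=
  fun z => fderiv ℝ Y z (X z) - fderiv ℝ X z (Y z)

/-- The constant vector field `∂/∂y^i` on `ℝ^{m−n} × ℝ^n` (here `p = m − n`). -/
def eVec (p n : ℕ) (i : Fin n) : (Fin p → ℝ) × (Fin n → ℝ) := (0, Pi.single i 1)

open Set Submodule Topology

theorem LinearIndependent.eq_zero_of_sum_smul_mem_span_sumElim {R M ι κ : Type*} [Ring R]
    [AddCommGroup M] [Module R M] [Fintype κ] {e : ι → M} {w : κ → M}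
    (h : LinearIndependent R (Sum.elim e w)) {c : κ → R}
    (hc : ∑ k, c k • w k ∈ span R (range e)) : c = 0 := by
  obtain ⟨-, hw, hdisj⟩ := linearIndependent_sum.1 h
  have hcw : ∑ k, c k • w k ∈ span R (range w) :=
    sum_mem fun k _ => smul_mem _ _ (subset_span (mem_range_self k))
  funext k
  exact Fintype.linearIndependent_iff.1 hw c ((disjoint_def.1 hdisj) _ hc hcw) k

section LieBracket

variable {E : Type*} [NormedAddCommGroup E] [NormedSpace ℝ E]

theorem lieB_const_left (v : E) (Y : E → E) (z : E) :
    lieB (fun _ => v) Y z = fderiv ℝ Y z v := by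
  simp [lieB]

theorem lieB_const_right (X : E → E) (v : E) (z : E) :
    lieB X (fun _ => v) z = -fderiv ℝ X z v := by
  simp [lieB]

theorem differentiableAt_lieB_const_right {X : E → E} {U : Set E} (hU : IsOpen U)
    {n : WithTop ℕ∞} (hX : ContDiffOn ℝ n X U) (hn : 2 ≤ n) (v : E) {z : E} (hz : z ∈ U) :
    DifferentiableAt ℝ (lieB X (fun _ => v)) z := by
  have hDX : ContDiffAt ℝ 1 (fderiv ℝ X) z :=
    (hX.contDiffAt (hU.mem_nhds hz)).fderiv_right (by simpa [one_add_one_eq_two] using hn)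
  rw [funext (lieB_const_right X v)]
  exact ((hDX.differentiableAt one_ne_zero).clm_apply (differentiableAt_const v)).neg

end LieBracket

section FrameExpansion

variable {E ι : Type*} [NormedAddCommGroup E] [NormedSpace ℝ E] [Fintype ι]
  {e : ι → E} {a b : ι → E → ℝ} {W : ι → E → E} {z : E}

theorem fderiv_sum_smul_add_sum_smul_apply (ha : ∀ k, DifferentiableAt ℝ (a k) z)
    (hb : ∀ k, DifferentiableAt ℝ (b k) z) (hW : ∀ k, DifferentiableAt ℝ (W k) z) (v : E) :
    fderiv ℝ (fun w => ∑ k, a k w • e k + ∑ k, b k w • W k w) z v =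
      ∑ k, fderiv ℝ (a k) z v • e k +
        ∑ k, (fderiv ℝ (b k) z v • W k z + b k z • fderiv ℝ (W k) z v) := by
  have hae : ∀ k, DifferentiableAt ℝ (fun w => a k w • e k) z :=
    fun k => (ha k).smul_const (e k)
  have hbW : ∀ k, DifferentiableAt ℝ (fun w => b k w • W k w) z :=
    fun k => (hb k).smul (hW k)
  rw [fderiv_fun_add (DifferentiableAt.fun_sum fun k _ => hae k)
      (DifferentiableAt.fun_sum fun k _ => hbW k),
    fderiv_fun_sum fun k _ => hae k, fderiv_fun_sum fun k _ => hbW k]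
  simp only [add_apply, FunLike.coe_sum, Finset.sum_apply,
    fderiv_smul_const (ha _), fderiv_fun_smul (hb _) (hW _)]
  simp [add_comm]

theorem fderiv_sum_smul_add_sum_smul_apply_sub_mem_span
    (ha : ∀ k, DifferentiableAt ℝ (a k) z) (hb : ∀ k, DifferentiableAt ℝ (b k) z)
    (hW : ∀ k, DifferentiableAt ℝ (W k) z) {v : E}
    (hWv : ∀ k, fderiv ℝ (W k) z v ∈ span ℝ (range e)) :
    fderiv ℝ (fun w => ∑ k, a k w • e k + ∑ k, b k w • W k w) z v
        - ∑ k, fderiv ℝ (b k) z v • W k z ∈ span ℝ (range e) := by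
  rw [fderiv_sum_smul_add_sum_smul_apply ha hb hW, Finset.sum_add_distrib, ← add_assoc,
    add_sub_right_comm, add_sub_cancel_right]
  exact add_mem (sum_mem fun k _ => smul_mem _ _ (subset_span (mem_range_self k)))
    (sum_mem fun k _ => smul_mem _ _ (hWv k))

end FrameExpansion

theorem stmt10 (p n : ℕ)
    (U : Set ((Fin p → ℝ) × (Fin n → ℝ))) (hU : IsOpen U)
    (F : ((Fin p → ℝ) × (Fin n → ℝ)) → (Fin p → ℝ) × (Fin n → ℝ))
    (hF : ContDiffOn ℝ (⊤ : ℕ∞) F U)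
    (W : Fin n → ((Fin p → ℝ) × (Fin n → ℝ)) → (Fin p → ℝ) × (Fin n → ℝ))
    (hW : ∀ i, W i = lieB F (fun _ => eVec p n i))
    (hli : ∀ z ∈ U, LinearIndependent ℝ
      (Sum.elim (fun i : Fin n => eVec p n i) (fun i : Fin n => W i z)))
    (hinv : ∀ z ∈ U, ∀ i j, lieB (fun _ => eVec p n i) (W j) z ∈
      Submodule.span ℝ (Set.range fun k : Fin n => eVec p n k))
    (a b : Fin n → ((Fin p → ℝ) × (Fin n → ℝ)) → ℝ)
    (ha : ∀ i, ContDiffOn ℝ (⊤ : ℕ∞) (a i) U)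
    (hb : ∀ i, ContDiffOn ℝ (⊤ : ℕ∞) (b i) U)
    (hFab : ∀ z ∈ U, F z = (∑ i, a i z • eVec p n i) + ∑ i, b i z • W i z) :
    ∀ z ∈ U, ∀ i j,
      fderiv ℝ (b j) z (eVec p n i) = -(if i = j then (1 : ℝ) else 0) := by
  intro z hz i j
  have hzU : U ∈ 𝓝 z := hU.mem_nhds hz
  have hDF : fderiv ℝ F z (eVec p n i) = -W i z := by rw [hW, lieB_const_right, neg_neg]
  have hexp := fderiv_sum_smul_add_sum_smul_apply_sub_mem_span (e := eVec p n)
    (fun k => ((ha k).contDiffAt hzU).differentiableAt (by simp))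
    (fun k => ((hb k).contDiffAt hzU).differentiableAt (by simp))
    (fun k => hW k ▸ differentiableAt_lieB_const_right hU hF (WithTop.coe_le_coe.2 le_top) _ hz)
    (fun k => lieB_const_left (eVec p n i) (W k) z ▸ hinv z hz i k)
  rw [← (Filter.eventuallyEq_of_mem hzU hFab).fderiv_eq, hDF] at hexp
  have hcoeff := (hli z hz).eq_zero_of_sum_smul_mem_span_sumElim
    (c := fun k => fderiv ℝ (b k) z (eVec p n i) + if i = k then 1 else 0) (by
      simpa [add_smul, Finset.sum_add_distrib, ite_smul, add_comm] using neg_mem hexp)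
  exact eq_neg_of_add_eq_zero_left (congrFun hcoeff j)
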